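/- arXiv:1311.6635 — 5 statements merged into one kernel-verified Lean document; each statement's English description precedes it below -/
import Mathlib

section
/- For any finite collection of events A_1, ..., A_M in a probability space, the probability of their union is at least the sum over i of P(A_i)^2 divided by the sum over i' of P(A_i ∩ A_{i'}) (de Caen's bound), assuming each P(A_i) > 0. -/
/-!
Split `Ω` into the atoms `{ω | ω ∈ A i ↔ i ∈ S}`, `S ⊆ ι`, with weights `w S` their probabilities. Then
`P(A i) = ∑_{S ∋ i} w S` and `∑_j P(A i ∩ A j) = ∑_{S ∋ i} #S * w S`, so by Cauchy–Schwarz the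
`i`-th term of the bound is at most `∑_{S ∋ i} w S / #S`. Summing over `i`, every nonempty atom
contributes exactly `w S`, and these add up to `P(⋃ i, A i)`.
-/

open MeasureTheory Finset

theorem Finset.sq_sum_div_sum_mul_le_sum_div {α R : Type*} [Field R] [LinearOrder R]
    [IsStrictOrderedRing R] {s : Finset α} {a c : α → R} (ha : ∀ x ∈ s, 0 ≤ a x)
    (hc : ∀ x ∈ s, 0 < c x) :
    (∑ x ∈ s, a x) ^ 2 / ∑ x ∈ s, c x * a x ≤ ∑ x ∈ s, a x / c x := by
  refine div_le_of_le_mul₀ (sum_nonneg fun x hx => mul_nonneg (hc x hx).le (ha x hx))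
    (sum_nonneg fun x hx => div_nonneg (ha x hx) (hc x hx).le) ?_
  refine sum_sq_le_sum_mul_sum_of_sq_le_mul s (fun x hx => div_nonneg (ha x hx) (hc x hx).le)
    (fun x hx => mul_nonneg (hc x hx).le (ha x hx)) fun x hx => le_of_eq ?_
  field_simp [(hc x hx).ne']

section Weights

variable {ι : Type*} [Fintype ι] [DecidableEq ι]

theorem sum_sum_filter_mem_and_mem {R : Type*} [NonAssocSemiring R] (w : Finset ι → R) (i : ι) :
    ∑ j, ∑ S with i ∈ S ∧ j ∈ S, w S = ∑ S with i ∈ S, (#S : R) * w S := by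
  rw [sum_comm' (t' := {S | i ∈ S}) (s' := fun S => S) (by simp [and_comm])]
  simp

theorem sum_sum_filter_mem_div_card {R : Type*} [Semifield R] [CharZero R]
    (w : Finset ι → R) :
    ∑ i, ∑ S with i ∈ S, w S / #S = ∑ S with S.Nonempty, w S := by
  rw [sum_comm' (t' := {S | S.Nonempty}) (s' := fun S => S)
    (by simpa using fun i S hi => ⟨i, hi⟩)]
  refine sum_congr rfl fun S hS => ?_
  have hcard : (#S : R) ≠ 0 := by simpa [card_ne_zero, nonempty_iff_ne_empty] using hS
  rw [sum_const, nsmul_eq_mul, mul_div_cancel₀ _ hcard]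

theorem sum_sq_div_sum_inter_le_sum_nonempty {R : Type*} [Field R] [LinearOrder R]
    [IsStrictOrderedRing R] {w : Finset ι → R} (hw : ∀ S, 0 ≤ w S) :
    ∑ i, (∑ S with i ∈ S, w S) ^ 2 / ∑ j, ∑ S with i ∈ S ∧ j ∈ S, w S
      ≤ ∑ S with S.Nonempty, w S := by
  simp_rw [sum_sum_filter_mem_and_mem, ← sum_sum_filter_mem_div_card]
  refine sum_le_sum fun i _ => sq_sum_div_sum_mul_le_sum_div (fun S _ => hw S) fun S hS => ?_
  exact Nat.cast_pos.2 (card_pos.2 ⟨i, (mem_filter.1 hS).2⟩)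

end Weights

section Atoms

variable {Ω ι : Type*} [Fintype ι]

open Classical in
noncomputable def occurringIndices (A : ι → Set Ω) (ω : Ω) : Finset ι := {i | ω ∈ A i}

@[simp]
theorem mem_occurringIndices {A : ι → Set Ω} {ω : Ω} {i : ι} :
    i ∈ occurringIndices A ω ↔ ω ∈ A i := by
  simp [occurringIndices]

variable [MeasurableSpace Ω] {A : ι → Set Ω}

theorem measurableSet_occurringIndices_preimage_singleton (hA : ∀ i, MeasurableSet (A i))
    (S : Finset ι) : MeasurableSet (occurringIndices A ⁻¹' {S}) := by
  have : occurringIndices A ⁻¹' {S} = {ω | ∀ i, ω ∈ A i ↔ i ∈ S} := by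
    ext ω; simp [Finset.ext_iff]
  rw [this]
  exact (Measurable.forall fun i => (hA i).mem.iff measurable_const).setOf

theorem measureReal_setOf_occurringIndices (μ : Measure Ω) [IsFiniteMeasure μ]
    (hA : ∀ i, MeasurableSet (A i)) (p : Finset ι → Prop) [DecidablePred p] :
    μ.real {ω | p (occurringIndices A ω)} = ∑ S with p S, μ.real (occurringIndices A ⁻¹' {S}) := by
  rw [sum_measureReal_preimage_singleton _
    fun S _ => measurableSet_occurringIndices_preimage_singleton hA S]
  congr 1; ext ω; simp

end Atoms

theorem deCaen_bound_general {Ω : Type*} [MeasurableSpace Ω] (μ : Measure Ω)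
    [IsProbabilityMeasure μ] {M : ℕ} (A : Fin M → Set Ω)
    (hA : ∀ i, MeasurableSet (A i)) :
    ∑ i, ((μ (A i)).toReal) ^ 2 / (∑ i', (μ (A i ∩ A i')).toReal)
      ≤ (μ (⋃ i, A i)).toReal := by
  set w : Finset (Fin M) → ℝ := fun S => μ.real (occurringIndices A ⁻¹' {S})
  have hmeas := measureReal_setOf_occurringIndices μ hA
  have hAi : ∀ i, μ.real (A i) = ∑ S with i ∈ S, w S := fun i => by
    rw [← hmeas]; congr 1; ext; simp
  have hAij : ∀ i j, μ.real (A i ∩ A j) = ∑ S with i ∈ S ∧ j ∈ S, w S := fun i j => by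
    rw [← hmeas]; congr 1; ext; simp
  have hU : μ.real (⋃ i, A i) = ∑ S with S.Nonempty, w S := by
    rw [← hmeas]; congr 1; ext; simp [Finset.Nonempty]
  simp only [← measureReal_def, hAi, hAij, hU]
  exact sum_sq_div_sum_inter_le_sum_nonempty fun S => measureReal_nonneg

/-- de Caen's bound: the probability of a finite union of events is at least
`∑ i, P(A i)² / ∑ i', P(A i ∩ A i')`. -/
theorem deCaen_bound {Ω : Type*} [MeasurableSpace Ω] (μ : Measure Ω)
    [IsProbabilityMeasure μ] {M : ℕ} (A : Fin M → Set Ω)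
    (hA : ∀ i, MeasurableSet (A i)) (hpos : ∀ i, 0 < (μ (A i)).toReal) :
    ∑ i, ((μ (A i)).toReal) ^ 2 / (∑ i', (μ (A i ∩ A i')).toReal)
      ≤ (μ (⋃ i, A i)).toReal :=
  deCaen_bound_general μ A hA
end

section
/- If A_1, ..., A_M are pairwise independent events, then the probability of their union is at least one half of the minimum of 1 and the sum of the individual probabilities: ℙ(⋃_i A_i) ≥ (1/2) min{1, Σ_i ℙ(A_i)}. -/
open MeasureTheory

/-!
Let `N = ∑ i, 𝟙_{A i}` count the events that occur and `s = ∑ i, ℙ(A i)`. Then `𝔼 N = s` and,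
by pairwise independence, `𝔼 N² ≤ s + s²`. As `N` vanishes off `U = ⋃ i, A i`, pointwise
`2 c N - c² N² = 1 - (1 - c N)² ≤ 𝟙_U` for every real `c`; integrating with `c = 1 / (1 + s)`
gives `ℙ(U) ≥ s / (1 + s) ≥ min 1 s / 2`.
-/

section
variable {Ω ι : Type*} [Fintype ι] {A : ι → Set Ω}

lemma sq_sum_indicator_one (ω : Ω) :
    (∑ i, (A i).indicator (1 : Ω → ℝ) ω) ^ 2 = ∑ i, ∑ j, (A i ∩ A j).indicator 1 ω := by
  simp only [sq, Finset.sum_mul_sum, Set.inter_indicator_one, Pi.mul_apply]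

variable [MeasurableSpace Ω] {μ : Measure Ω}

lemma sum_sum_measureReal_inter_le_of_pairwise [DecidableEq ι]
    (hpair : ∀ i j, i ≠ j → μ (A i ∩ A j) = μ (A i) * μ (A j)) :
    ∑ i, ∑ j, μ.real (A i ∩ A j) ≤ ∑ i, μ.real (A i) + (∑ i, μ.real (A i)) ^ 2 := by
  have hterm : ∀ i j, μ.real (A i ∩ A j) ≤
      (if i = j then μ.real (A i) else 0) + μ.real (A i) * μ.real (A j) := by
    intro i j
    by_cases hij : i = j
    · subst hij
      simp only [Set.inter_self, if_true, le_add_iff_nonneg_right]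
      positivity
    · simp [hij, measureReal_def, hpair i j hij, ENNReal.toReal_mul]
  calc ∑ i, ∑ j, μ.real (A i ∩ A j)
      ≤ ∑ i, ∑ j, ((if i = j then μ.real (A i) else 0) + μ.real (A i) * μ.real (A j)) :=
        Finset.sum_le_sum fun i _ ↦ Finset.sum_le_sum fun j _ ↦ hterm i j
    _ = ∑ i, μ.real (A i) + (∑ i, μ.real (A i)) ^ 2 := by
        simp only [Finset.sum_add_distrib, Finset.sum_ite_eq, Finset.mem_univ, if_true, sq,
          Finset.sum_mul_sum]

variable [IsFiniteMeasure μ]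

lemma two_mul_integral_sub_sq_mul_integral_sq_le {N : Ω → ℝ} {U : Set Ω} (hU : MeasurableSet U)
    (hN : Integrable N μ) (hN2 : Integrable (fun ω ↦ N ω ^ 2) μ) (hNU : ∀ ω ∉ U, N ω = 0)
    (c : ℝ) : 2 * c * ∫ ω, N ω ∂μ - c ^ 2 * ∫ ω, N ω ^ 2 ∂μ ≤ μ.real U := by
  have hpoint : ∀ ω, 2 * c * N ω - c ^ 2 * N ω ^ 2 ≤ U.indicator 1 ω := by
    intro ω
    by_cases hω : ω ∈ U
    · simp only [Set.indicator_of_mem hω, Pi.one_apply]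
      nlinarith [sq_nonneg (c * N ω - 1)]
    · simp [Set.indicator_of_notMem hω, hNU ω hω]
  calc 2 * c * ∫ ω, N ω ∂μ - c ^ 2 * ∫ ω, N ω ^ 2 ∂μ
      = ∫ ω, 2 * c * N ω - c ^ 2 * N ω ^ 2 ∂μ := by
        rw [integral_sub (hN.const_mul _) (hN2.const_mul _), integral_const_mul,
          integral_const_mul]
    _ ≤ ∫ ω, U.indicator 1 ω ∂μ :=
        integral_mono ((hN.const_mul _).sub (hN2.const_mul _))
          ((integrable_const 1).indicator hU) hpoint
    _ = μ.real U := integral_indicator_one hU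

lemma integrable_sum_indicator_one (hA : ∀ i, MeasurableSet (A i)) :
    Integrable (fun ω ↦ ∑ i, (A i).indicator (1 : Ω → ℝ) ω) μ :=
  integrable_finsetSum _ fun i _ ↦ (integrable_const 1).indicator (hA i)

lemma integral_sum_indicator_one (hA : ∀ i, MeasurableSet (A i)) :
    ∫ ω, ∑ i, (A i).indicator (1 : Ω → ℝ) ω ∂μ = ∑ i, μ.real (A i) := by
  rw [integral_finsetSum _ fun i _ ↦ (integrable_const 1).indicator (hA i)]
  exact Finset.sum_congr rfl fun i _ ↦ integral_indicator_one (hA i)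

lemma integrable_sq_sum_indicator_one (hA : ∀ i, MeasurableSet (A i)) :
    Integrable (fun ω ↦ (∑ i, (A i).indicator (1 : Ω → ℝ) ω) ^ 2) μ := by
  simp only [sq_sum_indicator_one]
  exact integrable_finsetSum _ fun i _ ↦ integrable_sum_indicator_one fun j ↦ (hA i).inter (hA j)

lemma integral_sq_sum_indicator_one (hA : ∀ i, MeasurableSet (A i)) :
    ∫ ω, (∑ i, (A i).indicator (1 : Ω → ℝ) ω) ^ 2 ∂μ = ∑ i, ∑ j, μ.real (A i ∩ A j) := by
  simp only [sq_sum_indicator_one]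
  rw [integral_finsetSum _ fun i _ ↦ integrable_sum_indicator_one fun j ↦ (hA i).inter (hA j)]
  exact Finset.sum_congr rfl fun i _ ↦ integral_sum_indicator_one fun j ↦ (hA i).inter (hA j)

end

lemma half_min_one_le_of_forall_two_mul_sub_le {s u : ℝ} (hs : 0 ≤ s)
    (h : ∀ c : ℝ, 2 * c * s - c ^ 2 * (s + s ^ 2) ≤ u) : 1 / 2 * min 1 s ≤ u := by
  have hdiv : s / (1 + s) ≤ u := by
    convert h (1 / (1 + s)) using 1
    field_simp
    ring
  rcases le_total s 1 with hs1 | hs1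
  · rw [min_eq_right hs1]
    refine le_trans ?_ hdiv
    rw [le_div_iff₀ (by positivity)]
    nlinarith
  · rw [min_eq_left hs1]
    refine le_trans ?_ hdiv
    rw [le_div_iff₀ (by positivity)]
    linarith

/-- For pairwise independent events, the probability of the union is at least half of
the truncated union bound `min{1, ∑ i P(A i)}`. -/
theorem pairwise_indep_union_lower {Ω : Type*} [MeasurableSpace Ω] (μ : Measure Ω)
    [IsProbabilityMeasure μ] {M : ℕ} (A : Fin M → Set Ω)
    (hA : ∀ i, MeasurableSet (A i))
    (hpair : ∀ i j, i ≠ j → μ (A i ∩ A j) = μ (A i) * μ (A j)) :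
    (1 / 2) * min 1 (∑ i, (μ (A i)).toReal) ≤ (μ (⋃ i, A i)).toReal := by
  simp only [← measureReal_def]
  set N : Ω → ℝ := fun ω ↦ ∑ i, (A i).indicator 1 ω
  have hNU : ∀ ω ∉ ⋃ i, A i, N ω = 0 := fun ω hω ↦ Finset.sum_eq_zero fun i _ ↦
    Set.indicator_of_notMem (fun h ↦ hω (Set.mem_iUnion_of_mem i h)) _
  refine half_min_one_le_of_forall_two_mul_sub_le (by positivity) fun c ↦ ?_
  calc 2 * c * ∑ i, μ.real (A i) - c ^ 2 * (∑ i, μ.real (A i) + (∑ i, μ.real (A i)) ^ 2)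
      ≤ 2 * c * ∑ i, μ.real (A i) - c ^ 2 * ∑ i, ∑ j, μ.real (A i ∩ A j) := by
        gcongr
        exact sum_sum_measureReal_inter_le_of_pairwise hpair
    _ = 2 * c * ∫ ω, N ω ∂μ - c ^ 2 * ∫ ω, N ω ^ 2 ∂μ := by
        rw [integral_sum_indicator_one hA, integral_sq_sum_indicator_one hA]
    _ ≤ μ.real (⋃ i, A i) :=
        two_mul_integral_sub_sq_mul_integral_sq_le (.iUnion hA)
          (integrable_sum_indicator_one hA)
          (integrable_sq_sum_indicator_one hA) hNU c
end

section
/- Let Z_1(1),...,Z_1(M_1) be identically distributed random variables on Z_1 with common law P_{Z_1}, and Z_2(1),...,Z_2(M_2) identically distributed on Z_2 with common law P_{Z_2}, with the two families independent of each other. Then for any measurable set A ⊆ Z_1 × Z_2, the probability that some pair (Z_1(i), Z_2(j)) lies in A is at most min{1, M_1 · E[min{1, M_2 · ℙ[(Z_1, Z_2) ∈ A | Z_1]}]}, where (Z_1, Z_2) ~ P_{Z_1} × P_{Z_2}. -/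
open MeasureTheory ProbabilityTheory
open scoped ENNReal

/-!
Write `Z₂ = (Z₂(j))ⱼ` for the whole second family. The pairs `(Z₁(i), Z₂)` are identically
distributed with law `P₁ ⊗ law(Z₂)`, and the event is the union over `i` of the events
`(Z₁(i), Z₂) ∈ B`, where `B = {(z₁, f) | ∃ j, (z₁, f j) ∈ A}`. The union bound over `i` and
Fubini bound its probability by `min{1, M₁ ∫ ℙ[(z₁, Z₂) ∈ B] dP₁(z₁)}`, and the union bound
over `j` bounds the integrand by `min{1, M₂ P₂(A_{z₁})}`.
-/

theorem measure_exists_mem_le_min_card_mul {Ω α ι : Type*} [MeasurableSpace Ω]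
    [MeasurableSpace α] [Fintype ι] (μ : Measure Ω) [IsProbabilityMeasure μ]
    (X : ι → Ω → α) (P : Measure α) (hX : ∀ i, Measurable (X i)) (hP : ∀ i, μ.map (X i) = P)
    {s : Set α} (hs : MeasurableSet s) :
    μ {ω | ∃ i, X i ω ∈ s} ≤ min 1 (Fintype.card ι * P s) := by
  refine le_min prob_le_one ?_
  calc μ {ω | ∃ i, X i ω ∈ s} = μ (⋃ i, X i ⁻¹' s) := by simp only [Set.ofPred_exists]; rfl
    _ ≤ ∑ i, μ (X i ⁻¹' s) := measure_iUnion_fintype_le μ _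
    _ = ∑ _i : ι, P s := by
      refine Finset.sum_congr rfl fun i _ => ?_
      rw [← hP i, Measure.map_apply (hX i) hs]
    _ = Fintype.card ι * P s := by simp

theorem ENNReal.toReal_min_one_natCast_mul (n : ℕ) {x : ℝ≥0∞} (hx : x ≠ ∞) :
    (min 1 (n * x)).toReal = min 1 (n * x.toReal) := by
  rw [ENNReal.toReal_min ENNReal.one_ne_top (ENNReal.mul_ne_top (ENNReal.natCast_ne_top n) hx),
    ENNReal.toReal_mul]
  simp

theorem integral_min_one_natCast_mul_toReal {α : Type*} [MeasurableSpace α] (P : Measure α)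
    (n : ℕ) {f : α → ℝ≥0∞} (hf : Measurable f) (hf_ne_top : ∀ x, f x ≠ ∞) :
    ∫ x, min 1 (n * (f x).toReal) ∂P = (∫⁻ x, min 1 (n * f x) ∂P).toReal := by
  rw [← integral_toReal (by fun_prop)
    (Filter.Eventually.of_forall fun x => (min_le_left _ _).trans_lt ENNReal.one_lt_top)]
  simp only [ENNReal.toReal_min_one_natCast_mul n (hf_ne_top _)]

theorem measure_exists_pair_mem_le_min {Ω α β : Type*} [MeasurableSpace Ω]
    [MeasurableSpace α] [MeasurableSpace β] (μ : Measure Ω) [IsProbabilityMeasure μ]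
    {M₁ M₂ : ℕ} (Z₁ : Fin M₁ → Ω → α) (Z₂ : Fin M₂ → Ω → β) (P₁ : Measure α) (P₂ : Measure β)
    (hm₁ : ∀ i, Measurable (Z₁ i)) (hm₂ : ∀ j, Measurable (Z₂ j))
    (hid₁ : ∀ i, μ.map (Z₁ i) = P₁) (hid₂ : ∀ j, μ.map (Z₂ j) = P₂)
    (hindep : IndepFun (fun ω i => Z₁ i ω) (fun ω j => Z₂ j ω) μ)
    {A : Set (α × β)} (hA : MeasurableSet A) :
    μ {ω | ∃ i j, (Z₁ i ω, Z₂ j ω) ∈ A}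
      ≤ min 1 (M₁ * ∫⁻ z₁, min 1 (M₂ * P₂ {z₂ | (z₁, z₂) ∈ A}) ∂P₁) := by
  set W : Ω → Fin M₂ → β := fun ω j => Z₂ j ω
  have hW : Measurable W := measurable_pi_iff.mpr hm₂
  set B : Set (α × (Fin M₂ → β)) := ⋃ j, (fun p => (p.1, p.2 j)) ⁻¹' A
  have hB : MeasurableSet B := .iUnion fun j => (by fun_prop : Measurable _) hA
  have hlaw : ∀ i, μ.map (fun ω => (Z₁ i ω, W ω)) = P₁.prod (μ.map W) := fun i => by
    rw [← hid₁ i, ← indepFun_iff_map_prod_eq_prod_map_map (hm₁ i).aemeasurable hW.aemeasurable]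
    exact hindep.comp (measurable_pi_apply i) measurable_id
  have hslice : ∀ z₁, μ.map W (Prod.mk z₁ ⁻¹' B) ≤ min 1 (M₂ * P₂ {z₂ | (z₁, z₂) ∈ A}) :=
    fun z₁ => by
      have hset : W ⁻¹' (Prod.mk z₁ ⁻¹' B) = {ω | ∃ j, Z₂ j ω ∈ {z₂ | (z₁, z₂) ∈ A}} := by
        ext ω; simp [B, W]
      rw [Measure.map_apply hW (measurable_prodMk_left hB), hset]
      simpa only [Fintype.card_fin] using measure_exists_mem_le_min_card_mul μ Z₂ P₂ hm₂ hid₂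
        (s := {z₂ | (z₁, z₂) ∈ A}) (measurable_prodMk_left hA)
  calc μ {ω | ∃ i j, (Z₁ i ω, Z₂ j ω) ∈ A} = μ {ω | ∃ i, (Z₁ i ω, W ω) ∈ B} := by simp [B, W]
    _ ≤ min 1 (M₁ * P₁.prod (μ.map W) B) := by
      simpa using measure_exists_mem_le_min_card_mul μ _ _ (fun i => (hm₁ i).prodMk hW) hlaw hB
    _ ≤ _ := by rw [Measure.prod_apply hB]; gcongr with z₁; exact hslice z₁

/-- Upper bound on the probability of a doubly-indexed union: with `Z₁(i)` identically
distributed with law `P₁`, `Z₂(j)` identically distributed with law `P₂`, and the two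
families independent, the probability that some pair lies in `A` is at most
`min{1, M₁ · E[min{1, M₂ · P₂(A_{Z₁})}]}`. -/
theorem union_double_upper {Ω α β : Type*} [MeasurableSpace Ω] [MeasurableSpace α]
    [MeasurableSpace β] (μ : Measure Ω) [IsProbabilityMeasure μ] {M₁ M₂ : ℕ}
    (Z₁ : Fin M₁ → Ω → α) (Z₂ : Fin M₂ → Ω → β)
    (P₁ : Measure α) (P₂ : Measure β) [IsProbabilityMeasure P₁] [IsProbabilityMeasure P₂]
    (hm₁ : ∀ i, Measurable (Z₁ i)) (hm₂ : ∀ j, Measurable (Z₂ j))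
    (hid₁ : ∀ i, μ.map (Z₁ i) = P₁) (hid₂ : ∀ j, μ.map (Z₂ j) = P₂)
    (hindep : IndepFun (fun ω i => Z₁ i ω) (fun ω j => Z₂ j ω) μ)
    (A : Set (α × β)) (hA : MeasurableSet A) :
    (μ {ω | ∃ i j, (Z₁ i ω, Z₂ j ω) ∈ A}).toReal
      ≤ min 1 ((M₁ : ℝ) * ∫ z₁, min 1 ((M₂ : ℝ) * (P₂ {z₂ | (z₁, z₂) ∈ A}).toReal) ∂P₁) := by
  have hL : ∫⁻ z₁, min 1 (M₂ * P₂ {z₂ | (z₁, z₂) ∈ A}) ∂P₁ ≠ ∞ :=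
    ne_top_of_le_ne_top (measure_ne_top P₁ Set.univ)
      ((lintegral_mono fun _ => min_le_left _ _).trans_eq (by simp))
  rw [integral_min_one_natCast_mul_toReal P₁ M₂ (f := fun z₁ => P₂ {z₂ | (z₁, z₂) ∈ A})
      (measurable_measure_prodMk_left hA) fun _ => measure_ne_top _ _,
    ← ENNReal.toReal_min_one_natCast_mul M₁ hL]
  exact ENNReal.toReal_mono (ne_top_of_le_ne_top ENNReal.one_ne_top (min_le_left _ _))
    (measure_exists_pair_mem_le_min μ Z₁ Z₂ P₁ P₂ hm₁ hm₂ hid₁ hid₂ hindep hA)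
end

section
/- Let Z_1(1),...,Z_1(M_1) and Z_2(1),...,Z_2(M_2) be two independent sequences, each consisting of pairwise independent identically distributed random variables with laws P_{Z_1} and P_{Z_2} respectively. Then for any measurable set A ⊆ Z_1 × Z_2, ℙ[⋃_{i,j} {(Z_1(i), Z_2(j)) ∈ A}] ≥ (1/4) min{1, M_1 p²/p_{12}, M_2 p²/p_{21}, M_1 M_2 p}, where p = ℙ[(Z_1,Z_2) ∈ A], p_{12} = ℙ[(Z_1,Z_2) ∈ A and (Z_1,Z_2') ∈ A], p_{21} = ℙ[(Z_1,Z_2) ∈ A and (Z_1',Z_2) ∈ A], with Z_1, Z_1' i.i.d. ~ P_{Z_1} and Z_2, Z_2' i.i.d. ~ P_{Z_2}, all mutually independent. -/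
/-!
Put `E (i, j) = {(Z₁ i, Z₂ j) ∈ A}`. The second-moment (Chung–Erdős / de Caen) inequality,
Cauchy–Schwarz applied to the counting variable `∑ 𝟙_{E q}`, gives
`ℙ[⋃ E q] ≥ (∑ ℙ[E q])² / ∑_{q, r} ℙ[E q ∩ E r]`.
By pairwise independence, `ℙ[E (i, j) ∩ E (k, l)]` is `p`, `p₁₂`, `p₂₁` or `p²` according as
`(i, j) = (k, l)`, only `i = k`, only `j = l`, or neither, so the denominator is at most
`M₁ M₂ (p + M₂ p₁₂ + M₁ p₂₁ + M₁ M₂ p²)`. Bounding this sum of four terms by four times the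
largest one produces the minimum in the statement.
-/

open MeasureTheory ProbabilityTheory
open scoped ENNReal

section SecondMoment
variable {Ω ι : Type*} [MeasurableSpace Ω] [Fintype ι]

lemma sq_lintegral_le_measure_univ_mul_lintegral_sq (μ : Measure Ω) {f : Ω → ℝ≥0∞}
    (hf : AEMeasurable f μ) :
    (∫⁻ ω, f ω ∂μ) ^ 2 ≤ μ Set.univ * ∫⁻ ω, f ω ^ 2 ∂μ := by
  have hsqrt (x : ℝ≥0∞) : (x ^ 2) ^ (2⁻¹ : ℝ) = x := by
    simpa using ENNReal.pow_rpow_inv_natCast two_ne_zero x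
  have hsq (x : ℝ≥0∞) : (x ^ (2⁻¹ : ℝ)) ^ 2 = x := by
    simpa using ENNReal.rpow_inv_natCast_pow two_ne_zero x
  have h := ENNReal.lintegral_mul_norm_pow_le (aemeasurable_const (b := (1 : ℝ≥0∞)))
    (hf.pow_const 2) (p := 2⁻¹) (q := 2⁻¹) (by norm_num) (by norm_num) (by norm_num)
  simp only [ENNReal.one_rpow, one_mul, hsqrt, lintegral_one] at h
  calc (∫⁻ ω, f ω ∂μ) ^ 2
      ≤ (μ Set.univ ^ (2⁻¹ : ℝ) * (∫⁻ ω, f ω ^ 2 ∂μ) ^ (2⁻¹ : ℝ)) ^ 2 := by gcongr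
    _ = μ Set.univ * ∫⁻ ω, f ω ^ 2 ∂μ := by rw [mul_pow, hsq, hsq]

lemma sq_sum_measure_le_measure_univ_mul_sum_measure_inter (μ : Measure Ω) {E : ι → Set Ω}
    (hE : ∀ i, MeasurableSet (E i)) :
    (∑ i, μ (E i)) ^ 2 ≤ μ Set.univ * ∑ i, ∑ j, μ (E i ∩ E j) := by
  have hind (i : ι) : Measurable ((E i).indicator (1 : Ω → ℝ≥0∞)) :=
    measurable_one.indicator (hE i)
  have hind₂ (i j : ι) : Measurable ((E i ∩ E j).indicator (1 : Ω → ℝ≥0∞)) :=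
    measurable_one.indicator ((hE i).inter (hE j))
  have hsq (ω : Ω) : (∑ i, (E i).indicator (1 : Ω → ℝ≥0∞) ω) ^ 2 =
      ∑ i, ∑ j, (E i ∩ E j).indicator 1 ω := by
    simp only [sq, Finset.sum_mul_sum, Set.inter_indicator_one, Pi.mul_apply]
  have hmean : ∫⁻ ω, ∑ i, (E i).indicator 1 ω ∂μ = ∑ i, μ (E i) := by
    rw [lintegral_finsetSum _ fun i _ => hind i]
    simp only [lintegral_indicator_one (hE _)]
  have hsecond : ∫⁻ ω, (∑ i, (E i).indicator 1 ω) ^ 2 ∂μ = ∑ i, ∑ j, μ (E i ∩ E j) := by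
    simp_rw [hsq]
    rw [lintegral_finsetSum _ fun i _ => Finset.measurable_sum _ fun j _ => hind₂ i j]
    simp only [lintegral_finsetSum _ fun j _ => hind₂ _ j,
      lintegral_indicator_one ((hE _).inter (hE _))]
  calc (∑ i, μ (E i)) ^ 2 = (∫⁻ ω, ∑ i, (E i).indicator 1 ω ∂μ) ^ 2 := by rw [hmean]
    _ ≤ μ Set.univ * ∫⁻ ω, (∑ i, (E i).indicator 1 ω) ^ 2 ∂μ :=
      sq_lintegral_le_measure_univ_mul_lintegral_sq μ
        (Finset.measurable_sum _ fun i _ => hind i).aemeasurable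
    _ = μ Set.univ * ∑ i, ∑ j, μ (E i ∩ E j) := by rw [hsecond]

lemma sq_sum_measure_le_measure_iUnion_mul_sum_measure_inter (μ : Measure Ω)
    {E : ι → Set Ω} (hE : ∀ i, MeasurableSet (E i)) :
    (∑ i, μ (E i)) ^ 2 ≤ μ (⋃ i, E i) * ∑ i, ∑ j, μ (E i ∩ E j) := by
  have h := sq_sum_measure_le_measure_univ_mul_sum_measure_inter (μ.restrict (⋃ i, E i)) hE
  simpa only [Measure.restrict_apply_univ,
    Measure.restrict_eq_self μ (Set.subset_iUnion E _),
    Measure.restrict_eq_self μ (Set.inter_subset_left.trans (Set.subset_iUnion E _))] using h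

lemma sq_sum_measureReal_le_measureReal_iUnion_mul_sum_measureReal_inter (μ : Measure Ω)
    [IsFiniteMeasure μ] {E : ι → Set Ω} (hE : ∀ i, MeasurableSet (E i)) :
    (∑ i, μ.real (E i)) ^ 2 ≤ μ.real (⋃ i, E i) * ∑ i, ∑ j, μ.real (E i ∩ E j) := by
  have h := ENNReal.toReal_mono (by simp [ENNReal.mul_eq_top, measure_ne_top])
    (sq_sum_measure_le_measure_iUnion_mul_sum_measure_inter μ hE)
  simpa [measureReal_def, ENNReal.toReal_sum, measure_ne_top] using h

end SecondMoment

section Independence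
variable {Ω γ δ : Type*} [MeasurableSpace Ω] [MeasurableSpace γ] [MeasurableSpace δ]
  {μ : Measure Ω} [IsFiniteMeasure μ] {X : Ω → γ} {Y : Ω → δ} {P : Measure γ} {Q : Measure δ}

lemma ProbabilityTheory.IndepFun.map_prodMk_eq_prod (h : IndepFun X Y μ) (hX : Measurable X)
    (hY : Measurable Y) (hP : μ.map X = P) (hQ : μ.map Y = Q) :
    μ.map (fun ω => (X ω, Y ω)) = P.prod Q := by
  rw [← hP, ← hQ]
  exact (indepFun_iff_map_prod_eq_prod_map_map hX.aemeasurable hY.aemeasurable).mp h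

lemma ProbabilityTheory.IndepFun.measureReal_prodMk_mem (h : IndepFun X Y μ)
    (hX : Measurable X) (hY : Measurable Y) (hP : μ.map X = P) (hQ : μ.map Y = Q)
    {B : Set (γ × δ)} (hB : MeasurableSet B) :
    μ.real {ω | (X ω, Y ω) ∈ B} = (P.prod Q).real B := by
  rw [← h.map_prodMk_eq_prod hX hY hP hQ, map_measureReal_apply (hX.prodMk hY) hB]
  rfl

end Independence

section PairSets
variable {α α' β β' : Type*} [MeasurableSpace α] [MeasurableSpace α'] [MeasurableSpace β]
  [MeasurableSpace β'] {A : Set (α × β)} {B : Set (α' × β')}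

def Set.pairsSharingFst (A : Set (α × β)) : Set (α × β × β) :=
  {x | (x.1, x.2.1) ∈ A ∧ (x.1, x.2.2) ∈ A}

def Set.pairsSharingSnd (A : Set (α × β)) : Set ((α × α) × β) :=
  {x | (x.1.1, x.2) ∈ A ∧ (x.1.2, x.2) ∈ A}

def Set.crossedPairs (A : Set (α × β)) (B : Set (α' × β')) : Set ((α × α') × (β × β')) :=
  {x | (x.1.1, x.2.1) ∈ A ∧ (x.1.2, x.2.2) ∈ B}

lemma MeasurableSet.pairsSharingFst (hA : MeasurableSet A) : MeasurableSet A.pairsSharingFst :=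
  ((measurable_fst.prodMk measurable_snd.fst) hA).inter
    ((measurable_fst.prodMk measurable_snd.snd) hA)

lemma MeasurableSet.pairsSharingSnd (hA : MeasurableSet A) : MeasurableSet A.pairsSharingSnd :=
  ((measurable_fst.fst.prodMk measurable_snd) hA).inter
    ((measurable_fst.snd.prodMk measurable_snd) hA)

lemma MeasurableSet.crossedPairs (hA : MeasurableSet A) (hB : MeasurableSet B) :
    MeasurableSet (A.crossedPairs B) :=
  ((measurable_fst.fst.prodMk measurable_snd.fst) hA).inter
    ((measurable_fst.snd.prodMk measurable_snd.snd) hB)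

lemma measureReal_prod_prod_crossedPairs (P₁ : Measure α) (P₁' : Measure α') (P₂ : Measure β)
    (P₂' : Measure β') [SFinite P₁'] [SFinite P₂] [SFinite P₂']
    (hA : MeasurableSet A) (hB : MeasurableSet B) :
    ((P₁.prod P₁').prod (P₂.prod P₂')).real (A.crossedPairs B) =
      (P₁.prod P₂).real A * (P₁'.prod P₂').real B := by
  have hsection (x : α × α') :
      Prod.mk x ⁻¹' A.crossedPairs B = (Prod.mk x.1 ⁻¹' A) ×ˢ (Prod.mk x.2 ⁻¹' B) := rfl
  simp_rw [measureReal_def, Measure.prod_apply (hA.crossedPairs hB), hsection,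
    Measure.prod_prod]
  rw [lintegral_prod_mul (measurable_measure_prodMk_left hA).aemeasurable
    (measurable_measure_prodMk_left hB).aemeasurable, Measure.prod_apply hA,
    Measure.prod_apply hB, ENNReal.toReal_mul]

end PairSets

section PairEvents
variable {Ω α β ι κ : Type*} [MeasurableSpace Ω] [MeasurableSpace α] [MeasurableSpace β]
  {μ : Measure Ω} [IsFiniteMeasure μ] {Z₁ : ι → Ω → α} {Z₂ : κ → Ω → β}
  {P₁ : Measure α} {P₂ : Measure β} {A : Set (α × β)}

lemma measureReal_pairEvent (hm₁ : ∀ i, Measurable (Z₁ i)) (hm₂ : ∀ j, Measurable (Z₂ j))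
    (hid₁ : ∀ i, μ.map (Z₁ i) = P₁) (hid₂ : ∀ j, μ.map (Z₂ j) = P₂)
    (hindep : IndepFun (fun ω i => Z₁ i ω) (fun ω j => Z₂ j ω) μ) (hA : MeasurableSet A)
    (i : ι) (j : κ) :
    μ.real {ω | (Z₁ i ω, Z₂ j ω) ∈ A} = (P₁.prod P₂).real A :=
  (hindep.comp (measurable_pi_apply i) (measurable_pi_apply j)).measureReal_prodMk_mem
    (hm₁ i) (hm₂ j) (hid₁ i) (hid₂ j) hA

lemma measureReal_pairEvent_inter_le [DecidableEq ι] [DecidableEq κ] [SFinite P₁] [SFinite P₂]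
    (hm₁ : ∀ i, Measurable (Z₁ i)) (hm₂ : ∀ j, Measurable (Z₂ j))
    (hid₁ : ∀ i, μ.map (Z₁ i) = P₁) (hid₂ : ∀ j, μ.map (Z₂ j) = P₂)
    (hpi₁ : ∀ i i', i ≠ i' → IndepFun (Z₁ i) (Z₁ i') μ)
    (hpi₂ : ∀ j j', j ≠ j' → IndepFun (Z₂ j) (Z₂ j') μ)
    (hindep : IndepFun (fun ω i => Z₁ i ω) (fun ω j => Z₂ j ω) μ) (hA : MeasurableSet A)
    (q r : ι × κ) :
    μ.real ({ω | (Z₁ q.1 ω, Z₂ q.2 ω) ∈ A} ∩ {ω | (Z₁ r.1 ω, Z₂ r.2 ω) ∈ A}) ≤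
      (if q = r then (P₁.prod P₂).real A else 0) +
      (if q.1 = r.1 then (P₁.prod (P₂.prod P₂)).real A.pairsSharingFst else 0) +
      (if q.2 = r.2 then ((P₁.prod P₁).prod P₂).real A.pairsSharingSnd else 0) +
      (P₁.prod P₂).real A ^ 2 := by
  obtain ⟨i, j⟩ := q
  obtain ⟨k, l⟩ := r
  simp only [Prod.mk.injEq]
  have hpair₁ (hik : i ≠ k) : μ.map (fun ω => (Z₁ i ω, Z₁ k ω)) = P₁.prod P₁ :=
    (hpi₁ i k hik).map_prodMk_eq_prod (hm₁ i) (hm₁ k) (hid₁ i) (hid₁ k)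
  have hpair₂ (hjl : j ≠ l) : μ.map (fun ω => (Z₂ j ω, Z₂ l ω)) = P₂.prod P₂ :=
    (hpi₂ j l hjl).map_prodMk_eq_prod (hm₂ j) (hm₂ l) (hid₂ j) (hid₂ l)
  have hfst := measurable_pi_apply (X := fun _ : ι => α)
  have hsnd := measurable_pi_apply (X := fun _ : κ => β)
  have hp₁₂ := measureReal_nonneg (μ := P₁.prod (P₂.prod P₂)) (s := A.pairsSharingFst)
  have hp₂₁ := measureReal_nonneg (μ := (P₁.prod P₁).prod P₂) (s := A.pairsSharingSnd)
  by_cases hik : i = k <;> by_cases hjl : j = l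
  · subst hik hjl
    simp only [Set.inter_self, measureReal_pairEvent hm₁ hm₂ hid₁ hid₂ hindep hA, and_self,
      if_true]
    nlinarith
  · subst hik
    have h : μ.real ({ω | (Z₁ i ω, Z₂ j ω) ∈ A} ∩ {ω | (Z₁ i ω, Z₂ l ω) ∈ A}) =
        (P₁.prod (P₂.prod P₂)).real A.pairsSharingFst :=
      (hindep.comp (hfst i) ((hsnd j).prodMk (hsnd l))).measureReal_prodMk_mem (hm₁ i)
        ((hm₂ j).prodMk (hm₂ l)) (hid₁ i) (hpair₂ hjl) hA.pairsSharingFst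
    simp only [h, hjl, and_false, if_false, if_true]
    nlinarith
  · subst hjl
    have h : μ.real ({ω | (Z₁ i ω, Z₂ j ω) ∈ A} ∩ {ω | (Z₁ k ω, Z₂ j ω) ∈ A}) =
        ((P₁.prod P₁).prod P₂).real A.pairsSharingSnd :=
      (hindep.comp ((hfst i).prodMk (hfst k)) (hsnd j)).measureReal_prodMk_mem
        ((hm₁ i).prodMk (hm₁ k)) (hm₂ j) (hpair₁ hik) (hid₂ j) hA.pairsSharingSnd
    simp only [h, hik, false_and, if_false, if_true]
    nlinarith
  · have h : μ.real ({ω | (Z₁ i ω, Z₂ j ω) ∈ A} ∩ {ω | (Z₁ k ω, Z₂ l ω) ∈ A}) =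
        (P₁.prod P₂).real A ^ 2 := by
      rw [sq, ← measureReal_prod_prod_crossedPairs P₁ P₁ P₂ P₂ hA hA]
      exact (hindep.comp ((hfst i).prodMk (hfst k)) ((hsnd j).prodMk (hsnd l))
        ).measureReal_prodMk_mem ((hm₁ i).prodMk (hm₁ k)) ((hm₂ j).prodMk (hm₂ l))
        (hpair₁ hik) (hpair₂ hjl) (hA.crossedPairs hA)
    simp only [h, hik, hjl, false_and, if_false]
    nlinarith

lemma sum_ite_prod_eq [Fintype ι] [Fintype κ] [DecidableEq ι] [DecidableEq κ] (q : ι × κ)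
    (a b c d : ℝ) :
    ∑ r : ι × κ, ((if q = r then a else 0) + (if q.1 = r.1 then b else 0) +
      (if q.2 = r.2 then c else 0) + d) =
      a + Fintype.card κ * b + Fintype.card ι * c + Fintype.card ι * Fintype.card κ * d := by
  have hfst : ∑ r : ι × κ, (if q.1 = r.1 then b else 0) = Fintype.card κ * b := by
    simp [Fintype.sum_prod_type_right]
  have hsnd : ∑ r : ι × κ, (if q.2 = r.2 then c else 0) = Fintype.card ι * c := by
    simp [Fintype.sum_prod_type]
  simp [Finset.sum_add_distrib, hfst, hsnd, mul_assoc]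

lemma sum_sum_measureReal_pairEvent_inter_le [Fintype ι] [Fintype κ] [SFinite P₁] [SFinite P₂]
    (hm₁ : ∀ i, Measurable (Z₁ i)) (hm₂ : ∀ j, Measurable (Z₂ j))
    (hid₁ : ∀ i, μ.map (Z₁ i) = P₁) (hid₂ : ∀ j, μ.map (Z₂ j) = P₂)
    (hpi₁ : ∀ i i', i ≠ i' → IndepFun (Z₁ i) (Z₁ i') μ)
    (hpi₂ : ∀ j j', j ≠ j' → IndepFun (Z₂ j) (Z₂ j') μ)
    (hindep : IndepFun (fun ω i => Z₁ i ω) (fun ω j => Z₂ j ω) μ) (hA : MeasurableSet A) :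
    ∑ q : ι × κ, ∑ r : ι × κ,
        μ.real ({ω | (Z₁ q.1 ω, Z₂ q.2 ω) ∈ A} ∩ {ω | (Z₁ r.1 ω, Z₂ r.2 ω) ∈ A}) ≤
      Fintype.card ι * Fintype.card κ * ((P₁.prod P₂).real A +
        Fintype.card κ * (P₁.prod (P₂.prod P₂)).real A.pairsSharingFst +
        Fintype.card ι * ((P₁.prod P₁).prod P₂).real A.pairsSharingSnd +
        Fintype.card ι * Fintype.card κ * (P₁.prod P₂).real A ^ 2) := by
  classical
  calc _ ≤ ∑ q : ι × κ, ∑ r : ι × κ,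
        ((if q = r then (P₁.prod P₂).real A else 0) +
          (if q.1 = r.1 then (P₁.prod (P₂.prod P₂)).real A.pairsSharingFst else 0) +
          (if q.2 = r.2 then ((P₁.prod P₁).prod P₂).real A.pairsSharingSnd else 0) +
          (P₁.prod P₂).real A ^ 2) := by
        gcongr with q _ r _
        exact measureReal_pairEvent_inter_le hm₁ hm₂ hid₁ hid₂ hpi₁ hpi₂ hindep hA q r
    _ = _ := by
        simp only [sum_ite_prod_eq, Finset.sum_const, Finset.card_univ, Fintype.card_prod,
          nsmul_eq_mul]
        push_cast
        ring

end PairEvents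

lemma quarter_min_le_of_sq_le_mul {m₁ m₂ p p₁₂ p₂₁ x : ℝ} (hp₁₂ : 0 ≤ p₁₂) (hp₂₁ : 0 ≤ p₂₁)
    (hx : 0 ≤ x)
    (h : (m₁ * m₂ * p) ^ 2 ≤ x * (m₁ * m₂ * (p + m₂ * p₁₂ + m₁ * p₂₁ + m₁ * m₂ * p ^ 2))) :
    1 / 4 * min 1 (min (m₁ * p ^ 2 / p₁₂) (min (m₂ * p ^ 2 / p₂₁) (m₁ * m₂ * p))) ≤ x := by
  set c := min 1 (min (m₁ * p ^ 2 / p₁₂) (min (m₂ * p ^ 2 / p₂₁) (m₁ * m₂ * p)))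
  rcases le_or_gt c 0 with hc | hc
  · linarith
  have hc₁ : c ≤ 1 := min_le_left _ _
  have hc₁₂ : c ≤ m₁ * p ^ 2 / p₁₂ := (min_le_right _ _).trans (min_le_left _ _)
  have hc₂₁ : c ≤ m₂ * p ^ 2 / p₂₁ :=
    (min_le_right _ _).trans ((min_le_right _ _).trans (min_le_left _ _))
  have hcN : c ≤ m₁ * m₂ * p :=
    (min_le_right _ _).trans ((min_le_right _ _).trans (min_le_right _ _))
  have hp₁₂ : 0 < p₁₂ := hp₁₂.lt_of_ne fun h => by simp [← h] at hc₁₂; linarith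
  have hp₂₁ : 0 < p₂₁ := hp₂₁.lt_of_ne fun h => by simp [← h] at hc₂₁; linarith
  rw [le_div_iff₀ hp₁₂] at hc₁₂
  rw [le_div_iff₀ hp₂₁] at hc₂₁
  have hm₁ : 0 < m₁ := by nlinarith [sq_nonneg p]
  have hm₂ : 0 < m₂ := by nlinarith [sq_nonneg p]
  have hN : 0 < m₁ * m₂ := mul_pos hm₁ hm₂
  have hp : 0 < p := by nlinarith
  set D := p + m₂ * p₁₂ + m₁ * p₂₁ + m₁ * m₂ * p ^ 2
  have hD : 0 < D := by positivity
  have hcD : c * D ≤ 4 * (m₁ * m₂ * p ^ 2) := by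
    have := mul_le_mul_of_nonneg_right hcN hp.le
    have := mul_le_mul_of_nonneg_left hc₁₂ hm₂.le
    have := mul_le_mul_of_nonneg_left hc₂₁ hm₁.le
    have := mul_le_mul_of_nonneg_right hc₁ (mul_pos hN (pow_pos hp 2)).le
    nlinarith
  have hND : m₁ * m₂ * p ^ 2 ≤ x * D :=
    le_of_mul_le_mul_left (by nlinarith) hN
  nlinarith

/-- Lower bound on the probability of a doubly-indexed union via de Caen's inequality:
with two independent sequences, each pairwise independent and identically distributed,
`ℙ[⋃_{i,j} {(Z₁(i),Z₂(j)) ∈ A}] ≥ (1/4) min{1, M₁ p²/p₁₂, M₂ p²/p₂₁, M₁ M₂ p}`. -/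
theorem union_double_lower {Ω α β : Type*} [MeasurableSpace Ω] [MeasurableSpace α]
    [MeasurableSpace β] (μ : Measure Ω) [IsProbabilityMeasure μ] {M₁ M₂ : ℕ}
    (Z₁ : Fin M₁ → Ω → α) (Z₂ : Fin M₂ → Ω → β)
    (P₁ : Measure α) (P₂ : Measure β) [IsProbabilityMeasure P₁] [IsProbabilityMeasure P₂]
    (hm₁ : ∀ i, Measurable (Z₁ i)) (hm₂ : ∀ j, Measurable (Z₂ j))
    (hid₁ : ∀ i, μ.map (Z₁ i) = P₁) (hid₂ : ∀ j, μ.map (Z₂ j) = P₂)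
    (hpi₁ : ∀ i i', i ≠ i' → IndepFun (Z₁ i) (Z₁ i') μ)
    (hpi₂ : ∀ j j', j ≠ j' → IndepFun (Z₂ j) (Z₂ j') μ)
    (hindep : IndepFun (fun ω i => Z₁ i ω) (fun ω j => Z₂ j ω) μ)
    (A : Set (α × β)) (hA : MeasurableSet A)
    (p p₁₂ p₂₁ : ℝ)
    (hp : p = ((P₁.prod P₂) A).toReal)
    (hp₁₂ : p₁₂ = ((P₁.prod (P₂.prod P₂))
      {x : α × β × β | (x.1, x.2.1) ∈ A ∧ (x.1, x.2.2) ∈ A}).toReal)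
    (hp₂₁ : p₂₁ = (((P₁.prod P₁).prod P₂)
      {x : (α × α) × β | (x.1.1, x.2) ∈ A ∧ (x.1.2, x.2) ∈ A}).toReal) :
    (1 / 4) * min 1 (min ((M₁ : ℝ) * p ^ 2 / p₁₂)
        (min ((M₂ : ℝ) * p ^ 2 / p₂₁) ((M₁ : ℝ) * (M₂ : ℝ) * p)))
      ≤ (μ {ω | ∃ i j, (Z₁ i ω, Z₂ j ω) ∈ A}).toReal := by
  subst hp hp₁₂ hp₂₁
  have hE (q : Fin M₁ × Fin M₂) : MeasurableSet {ω | (Z₁ q.1 ω, Z₂ q.2 ω) ∈ A} :=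
    ((hm₁ q.1).prodMk (hm₂ q.2)) hA
  have hunion : {ω | ∃ i j, (Z₁ i ω, Z₂ j ω) ∈ A} =
      ⋃ q : Fin M₁ × Fin M₂, {ω | (Z₁ q.1 ω, Z₂ q.2 ω) ∈ A} := by
    ext; simp
  have hmoments := sq_sum_measureReal_le_measureReal_iUnion_mul_sum_measureReal_inter μ hE
  simp only [← hunion, measureReal_pairEvent hm₁ hm₂ hid₁ hid₂ hindep hA, Finset.sum_const,
    Finset.card_univ, Fintype.card_prod, Fintype.card_fin, nsmul_eq_mul, Nat.cast_mul] at hmoments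
  have hsecond := sum_sum_measureReal_pairEvent_inter_le hm₁ hm₂ hid₁ hid₂ hpi₁ hpi₂ hindep hA
  simp only [Fintype.card_fin] at hsecond
  exact quarter_min_le_of_sq_le_mul measureReal_nonneg measureReal_nonneg measureReal_nonneg
    (hmoments.trans (mul_le_mul_of_nonneg_left hsecond measureReal_nonneg))
end

section
/- Under the setup of the doubly-indexed union with pairwise independent sequences, if additionally ℙ[(z_1, Z_2) ∈ A] takes the same value for all z_1 in the projection A_1 of A onto the first coordinate, and ℙ[(Z_1, z_2) ∈ A] takes the same value for all z_2 in the projection A_2 onto the second coordinate, then ℙ[⋃_{i,j} {(Z_1(i), Z_2(j)) ∈ A}] ≥ (1/4) min{1, M_1 ℙ[Z_1 ∈ A_1], M_2 ℙ[Z_2 ∈ A_2], M_1 M_2 ℙ[(Z_1, Z_2) ∈ A]}. -/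
/-!
Second moment method for the number `N` of pairs `(i, j)` with `(Z₁ i, Z₂ j) ∈ A`:
Cauchy–Schwarz gives `(𝔼 N)² ≤ 𝔼[N²] ℙ[N ≠ 0]`. With `p = ℙ[(Z₁, Z₂) ∈ A]` we have
`𝔼 N = M₁ M₂ p`, and the probability that both `(i, j)` and `(i', j')` are counted is `p` if the
pairs agree, `p²` if both indices differ, and the mean square of a slice probability if exactly one
index is shared. Because the slice probabilities are constant on the projections, these mean
squares are `p² / P₁(A₁)` and `p² / P₂(A₂)`. So with `m = M₁ M₂ p`,
`𝔼[N²] ≤ m + m² / (M₁ P₁(A₁)) + m² / (M₂ P₂(A₂)) + m²`, and each of the four terms is at most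
`m² / t` for `t` the minimum in the statement.
-/

open MeasureTheory ProbabilityTheory
open scoped ENNReal

theorem sq_lintegral_mul_le_lintegral_sq_mul_lintegral_sq {α : Type*} [MeasurableSpace α]
    {μ : Measure α} {f g : α → ℝ≥0∞} (hf : AEMeasurable f μ) (hg : AEMeasurable g μ) :
    (∫⁻ x, f x * g x ∂μ) ^ 2 ≤ (∫⁻ x, f x ^ 2 ∂μ) * ∫⁻ x, g x ^ 2 ∂μ := by
  have h := ENNReal.lintegral_mul_le_Lp_mul_Lq μ .two_two hf hg
  rw [← ENNReal.mul_rpow_of_nonneg _ _ (by norm_num), one_div,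
    ENNReal.le_rpow_inv_iff two_pos] at h
  simpa only [ENNReal.rpow_two, Pi.mul_apply] using h

section SecondMoment

variable {Ω ι : Type*} [MeasurableSpace Ω] {μ : Measure Ω} [Fintype ι] {E : ι → Set Ω}

theorem sq_sum_measure_le_sum_measure_inter_mul_measure_iUnion
    (hE : ∀ i, MeasurableSet (E i)) :
    (∑ i, μ (E i)) ^ 2 ≤ (∑ i, ∑ j, μ (E i ∩ E j)) * μ (⋃ i, E i) := by
  have hU : MeasurableSet (⋃ i, E i) := MeasurableSet.iUnion hE
  set U := ⋃ i, E i
  set N : Ω → ℝ≥0∞ := fun ω => ∑ i, (E i).indicator 1 ω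
  have hN : Measurable N := Finset.measurable_sum _ fun i _ => measurable_one.indicator (hE i)
  have hN_mean : ∫⁻ ω, N ω * U.indicator 1 ω ∂μ = ∑ i, μ (E i) := by
    have hN_supp : ∀ ω, N ω * U.indicator 1 ω = ∑ i, (E i).indicator 1 ω := by
      intro ω
      by_cases hω : ω ∈ U
      · simp [N, hω]
      · simp only [Set.indicator_of_notMem hω, mul_zero]
        refine (Finset.sum_eq_zero fun i _ => ?_).symm
        exact Set.indicator_of_notMem (fun h => hω (Set.mem_iUnion_of_mem i h)) _
    simp only [hN_supp]
    rw [lintegral_finsetSum _ fun i _ => measurable_one.indicator (hE i)]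
    simp only [lintegral_indicator_one (hE _)]
  have hN_sq : ∫⁻ ω, N ω ^ 2 ∂μ = ∑ i, ∑ j, μ (E i ∩ E j) := by
    simp only [N, sq, Finset.sum_mul_sum, ← Pi.mul_apply (Set.indicator _ _),
      ← Set.inter_indicator_one]
    rw [lintegral_finsetSum _ fun i _ => Finset.measurable_sum _ fun j _ =>
      measurable_one.indicator ((hE i).inter (hE j))]
    simp only [lintegral_finsetSum _ fun j _ => measurable_one.indicator ((hE _).inter (hE j)),
      lintegral_indicator_one ((hE _).inter (hE _))]
  have hU_sq : ∫⁻ ω, U.indicator 1 ω ^ 2 ∂μ = μ U := by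
    simp only [sq, ← Pi.mul_apply (Set.indicator _ _), ← Set.inter_indicator_one, Set.inter_self]
    exact lintegral_indicator_one hU
  have h := sq_lintegral_mul_le_lintegral_sq_mul_lintegral_sq hN.aemeasurable
    ((measurable_one.indicator hU).aemeasurable (μ := μ))
  rwa [hN_mean, hN_sq, hU_sq] at h

theorem sq_sum_measureReal_le_sum_measureReal_inter_mul_measureReal_iUnion
    [IsFiniteMeasure μ] (hE : ∀ i, MeasurableSet (E i)) :
    (∑ i, μ.real (E i)) ^ 2 ≤ (∑ i, ∑ j, μ.real (E i ∩ E j)) * μ.real (⋃ i, E i) := by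
  have h := ENNReal.toReal_mono (ENNReal.mul_ne_top (ENNReal.sum_ne_top.2 fun _ _ =>
      ENNReal.sum_ne_top.2 fun _ _ => measure_ne_top _ _) (measure_ne_top _ _))
    (sq_sum_measure_le_sum_measure_inter_mul_measure_iUnion (μ := μ) hE)
  simpa only [ENNReal.toReal_pow, ENNReal.toReal_mul, measureReal_def,
    ENNReal.toReal_sum fun _ _ => measure_ne_top _ _,
    ENNReal.toReal_sum fun _ _ => ENNReal.sum_ne_top.2 fun _ _ => measure_ne_top _ _] using h

end SecondMoment

section ProductLaws

variable {Ω α β : Type*} [MeasurableSpace Ω] [MeasurableSpace α] [MeasurableSpace β]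
  {μ : Measure Ω} [IsFiniteMeasure μ] {P : Measure α} {Q : Measure β}
  {X X' : Ω → α} {Y Y' : Ω → β} {A : Set (α × β)}

theorem map_prodMk_eq_prod_of_indepFun (hX : Measurable X) (hY : Measurable Y)
    (hXY : IndepFun X Y μ) (hPX : μ.map X = P) (hQY : μ.map Y = Q) :
    μ.map (fun ω => (X ω, Y ω)) = P.prod Q := by
  rw [hXY.map_prod_eq_prod_map_map hX.aemeasurable hY.aemeasurable, hPX, hQY]

theorem measure_prodMk_mem_eq_prod_of_indepFun (hX : Measurable X) (hY : Measurable Y)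
    (hXY : IndepFun X Y μ) (hPX : μ.map X = P) (hQY : μ.map Y = Q) (hA : MeasurableSet A) :
    μ {ω | (X ω, Y ω) ∈ A} = P.prod Q A := by
  rw [← map_prodMk_eq_prod_of_indepFun hX hY hXY hPX hQY, Measure.map_apply (hX.prodMk hY) hA]
  rfl

theorem measure_prodMk_mem_inter_prodMk_mem_same_left [SFinite Q] (hX : Measurable X)
    (hY : Measurable Y) (hY' : Measurable Y') (hXY : IndepFun X (fun ω => (Y ω, Y' ω)) μ)
    (hYY' : IndepFun Y Y' μ)
    (hPX : μ.map X = P) (hQY : μ.map Y = Q) (hQY' : μ.map Y' = Q) (hA : MeasurableSet A) :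
    μ ({ω | (X ω, Y ω) ∈ A} ∩ {ω | (X ω, Y' ω) ∈ A}) = ∫⁻ x, Q (Prod.mk x ⁻¹' A) ^ 2 ∂P := by
  set T : Set (α × β × β) := {q | (q.1, q.2.1) ∈ A ∧ (q.1, q.2.2) ∈ A}
  have hT : MeasurableSet T :=
    ((measurable_fst.prodMk measurable_snd.fst) hA).inter
      ((measurable_fst.prodMk measurable_snd.snd) hA)
  calc μ ({ω | (X ω, Y ω) ∈ A} ∩ {ω | (X ω, Y' ω) ∈ A})
      = μ {ω | (X ω, (Y ω, Y' ω)) ∈ T} := rfl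
    _ = P.prod (Q.prod Q) T := measure_prodMk_mem_eq_prod_of_indepFun hX (hY.prodMk hY') hXY hPX
          (map_prodMk_eq_prod_of_indepFun hY hY' hYY' hQY hQY') hT
    _ = ∫⁻ x, Q (Prod.mk x ⁻¹' A) ^ 2 ∂P := by
      rw [Measure.prod_apply hT]
      refine lintegral_congr fun x => ?_
      rw [sq, ← Measure.prod_prod]
      rfl

theorem measure_prodMk_mem_inter_prodMk_mem_same_right [SFinite P] (hX : Measurable X)
    (hX' : Measurable X') (hY : Measurable Y) (hXY : IndepFun (fun ω => (X ω, X' ω)) Y μ)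
    (hXX' : IndepFun X X' μ) (hPX : μ.map X = P) (hPX' : μ.map X' = P) (hQY : μ.map Y = Q)
    (hA : MeasurableSet A) :
    μ ({ω | (X ω, Y ω) ∈ A} ∩ {ω | (X' ω, Y ω) ∈ A}) = ∫⁻ y, P {x | (x, y) ∈ A} ^ 2 ∂Q :=
  measure_prodMk_mem_inter_prodMk_mem_same_left hY hX hX' hXY.symm hXX' hQY hPX hPX'
    (hA.preimage measurable_swap)

theorem measure_prodMk_mem_inter_prodMk_mem_of_indepFun [SFinite P] [SFinite Q]
    (hX : Measurable X) (hX' : Measurable X') (hY : Measurable Y) (hY' : Measurable Y')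
    (hXY : IndepFun (fun ω => (X ω, X' ω)) (fun ω => (Y ω, Y' ω)) μ) (hXX' : IndepFun X X' μ)
    (hYY' : IndepFun Y Y' μ) (hPX : μ.map X = P) (hPX' : μ.map X' = P) (hQY : μ.map Y = Q)
    (hQY' : μ.map Y' = Q) (hA : MeasurableSet A) :
    μ ({ω | (X ω, Y ω) ∈ A} ∩ {ω | (X' ω, Y' ω) ∈ A}) = (P.prod Q A) ^ 2 := by
  set T : Set ((α × α) × β × β) := {q | (q.1.1, q.2.1) ∈ A ∧ (q.1.2, q.2.2) ∈ A}
  have hT : MeasurableSet T :=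
    ((measurable_fst.fst.prodMk measurable_snd.fst) hA).inter
      ((measurable_fst.snd.prodMk measurable_snd.snd) hA)
  have hslice : Measurable fun x => Q (Prod.mk x ⁻¹' A) := measurable_measure_prodMk_left hA
  calc μ ({ω | (X ω, Y ω) ∈ A} ∩ {ω | (X' ω, Y' ω) ∈ A})
      = μ {ω | ((X ω, X' ω), (Y ω, Y' ω)) ∈ T} := rfl
    _ = (P.prod P).prod (Q.prod Q) T :=
        measure_prodMk_mem_eq_prod_of_indepFun (hX.prodMk hX') (hY.prodMk hY') hXY
          (map_prodMk_eq_prod_of_indepFun hX hX' hXX' hPX hPX')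
          (map_prodMk_eq_prod_of_indepFun hY hY' hYY' hQY hQY') hT
    _ = ∫⁻ x : α × α, Q (Prod.mk x.1 ⁻¹' A) * Q (Prod.mk x.2 ⁻¹' A) ∂(P.prod P) := by
      rw [Measure.prod_apply hT]
      refine lintegral_congr fun x => ?_
      rw [← Measure.prod_prod]
      rfl
    _ = (P.prod Q A) ^ 2 := by
      rw [lintegral_prod_mul hslice.aemeasurable hslice.aemeasurable, Measure.prod_apply hA, sq]

end ProductLaws

section Slices

variable {α β : Type*} [MeasurableSpace α] [MeasurableSpace β] {P : Measure α} {Q : Measure β}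
  {A : Set (α × β)}

theorem measure_mul_lintegral_sq_eq_sq_lintegral {f : α → ℝ≥0∞} {S : Set α}
    (hS : MeasurableSet S) (hf_zero : ∀ x ∉ S, f x = 0) (hf_const : ∀ x ∈ S, ∀ y ∈ S, f x = f y) :
    P S * ∫⁻ x, f x ^ 2 ∂P = (∫⁻ x, f x ∂P) ^ 2 := by
  rcases S.eq_empty_or_nonempty with rfl | ⟨x₀, hx₀⟩
  · simp [show f = 0 from funext fun x => hf_zero x (Set.notMem_empty x)]
  set c := f x₀
  have hf : ∀ n ≠ 0, (fun x => f x ^ n) = S.indicator fun _ => c ^ n := by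
    intro n hn; ext x
    by_cases hx : x ∈ S
    · simp [hx, c, hf_const x hx x₀ hx₀]
    · simp [hx, hf_zero x hx, hn]
  have h1 := hf 1 one_ne_zero
  simp only [pow_one] at h1
  rw [hf 2 two_ne_zero, h1, lintegral_indicator_const hS, lintegral_indicator_const hS]
  ring

theorem measure_proj_mul_lintegral_sq_slice_eq_sq_prod_apply [SFinite Q]
    (hA : MeasurableSet A) {A₁ : Set α} (hA₁ : A₁ = {x | ∃ y, (x, y) ∈ A})
    (hA₁m : MeasurableSet A₁)
    (hconst : ∀ x ∈ A₁, ∀ x' ∈ A₁, Q {y | (x, y) ∈ A} = Q {y | (x', y) ∈ A}) :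
    P A₁ * ∫⁻ x, Q (Prod.mk x ⁻¹' A) ^ 2 ∂P = (P.prod Q A) ^ 2 := by
  rw [Measure.prod_apply hA]
  refine measure_mul_lintegral_sq_eq_sq_lintegral hA₁m (fun x hx => ?_) hconst
  rw [show Prod.mk x ⁻¹' A = ∅ from Set.eq_empty_of_forall_notMem fun y hy => hx (hA₁ ▸ ⟨y, hy⟩),
    measure_empty]

theorem measure_proj_mul_lintegral_sq_slice_eq_sq_prod_apply_symm [SFinite P] [SFinite Q]
    (hA : MeasurableSet A) {A₂ : Set β} (hA₂ : A₂ = {y | ∃ x, (x, y) ∈ A})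
    (hA₂m : MeasurableSet A₂)
    (hconst : ∀ y ∈ A₂, ∀ y' ∈ A₂, P {x | (x, y) ∈ A} = P {x | (x, y') ∈ A}) :
    Q A₂ * ∫⁻ y, P {x | (x, y) ∈ A} ^ 2 ∂Q = (P.prod Q A) ^ 2 := by
  rw [← Measure.prod_swap, Measure.map_apply measurable_swap hA]
  exact measure_proj_mul_lintegral_sq_slice_eq_sq_prod_apply (hA.preimage measurable_swap) hA₂
    hA₂m hconst

end Slices

theorem measure_prodMk_mem_inter_prodMk_mem_eq_ite {Ω α β ι₁ ι₂ : Type*} [MeasurableSpace Ω]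
    [MeasurableSpace α] [MeasurableSpace β] [DecidableEq ι₁] [DecidableEq ι₂] {μ : Measure Ω}
    [IsFiniteMeasure μ] {Z₁ : ι₁ → Ω → α} {Z₂ : ι₂ → Ω → β} {P₁ : Measure α} {P₂ : Measure β}
    [SFinite P₁] [SFinite P₂] (hm₁ : ∀ i, Measurable (Z₁ i)) (hm₂ : ∀ j, Measurable (Z₂ j))
    (hid₁ : ∀ i, μ.map (Z₁ i) = P₁) (hid₂ : ∀ j, μ.map (Z₂ j) = P₂)
    (hpi₁ : ∀ i i', i ≠ i' → IndepFun (Z₁ i) (Z₁ i') μ)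
    (hpi₂ : ∀ j j', j ≠ j' → IndepFun (Z₂ j) (Z₂ j') μ)
    (hindep : IndepFun (fun ω i => Z₁ i ω) (fun ω j => Z₂ j ω) μ)
    {A : Set (α × β)} (hA : MeasurableSet A) (i i' : ι₁) (j j' : ι₂) :
    μ ({ω | (Z₁ i ω, Z₂ j ω) ∈ A} ∩ {ω | (Z₁ i' ω, Z₂ j' ω) ∈ A}) =
      if i = i' then if j = j' then P₁.prod P₂ A else ∫⁻ x, P₂ (Prod.mk x ⁻¹' A) ^ 2 ∂P₁
      else if j = j' then ∫⁻ y, P₁ {x | (x, y) ∈ A} ^ 2 ∂P₂ else (P₁.prod P₂ A) ^ 2 := by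
  have eval₁ (i : ι₁) : Measurable fun z : ι₁ → α => z i := measurable_pi_apply i
  have eval₂ (j : ι₂) : Measurable fun z : ι₂ → β => z j := measurable_pi_apply j
  rcases eq_or_ne i i' with rfl | hi <;> rcases eq_or_ne j j' with rfl | hj
  · rw [if_pos rfl, if_pos rfl, Set.inter_self]
    exact measure_prodMk_mem_eq_prod_of_indepFun (hm₁ i) (hm₂ j)
      (hindep.comp (eval₁ i) (eval₂ j)) (hid₁ i) (hid₂ j) hA
  · rw [if_pos rfl, if_neg hj]
    exact measure_prodMk_mem_inter_prodMk_mem_same_left (hm₁ i) (hm₂ j) (hm₂ j')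
      (hindep.comp (eval₁ i) ((eval₂ j).prodMk (eval₂ j'))) (hpi₂ j j' hj) (hid₁ i) (hid₂ j)
      (hid₂ j') hA
  · rw [if_neg hi, if_pos rfl]
    exact measure_prodMk_mem_inter_prodMk_mem_same_right (hm₁ i) (hm₁ i') (hm₂ j)
      (hindep.comp ((eval₁ i).prodMk (eval₁ i')) (eval₂ j)) (hpi₁ i i' hi) (hid₁ i) (hid₁ i')
      (hid₂ j) hA
  · rw [if_neg hi, if_neg hj]
    exact measure_prodMk_mem_inter_prodMk_mem_of_indepFun (hm₁ i) (hm₁ i') (hm₂ j) (hm₂ j')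
      (hindep.comp ((eval₁ i).prodMk (eval₁ i')) ((eval₂ j).prodMk (eval₂ j')))
      (hpi₁ i i' hi) (hpi₂ j j' hj) (hid₁ i) (hid₁ i') (hid₂ j) (hid₂ j') hA

theorem sum_sum_ite_fst_snd_le {ι₁ ι₂ : Type*} [Fintype ι₁] [Fintype ι₂] [DecidableEq ι₁]
    [DecidableEq ι₂] {a b c d : ℝ} (hb : 0 ≤ b) (hc : 0 ≤ c) (hd : 0 ≤ d) :
    ∑ k : ι₁ × ι₂, ∑ k' : ι₁ × ι₂,
        (if k.1 = k'.1 then if k.2 = k'.2 then a else b else if k.2 = k'.2 then c else d) ≤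
      Fintype.card ι₁ * Fintype.card ι₂ * a + Fintype.card ι₁ * Fintype.card ι₂ ^ 2 * b +
        Fintype.card ι₁ ^ 2 * Fintype.card ι₂ * c + (Fintype.card ι₁ * Fintype.card ι₂) ^ 2 * d :=
  calc _ ≤ ∑ k : ι₁ × ι₂, ∑ k' : ι₁ × ι₂, ((if k = k' then a else 0) +
        (if k.1 = k'.1 then b else 0) + (if k.2 = k'.2 then c else 0) + d) := by
        gcongr with k _ k' _
        rcases k with ⟨i, j⟩; rcases k' with ⟨i', j'⟩
        by_cases hi : i = i' <;> by_cases hj : j = j' <;> simp [hi, hj] <;> linarith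
    _ = _ := by
        have hb (k : ι₁ × ι₂) : ∑ k' : ι₁ × ι₂, (if k.1 = k'.1 then b else 0) =
            Fintype.card ι₂ * b := by
          simp [Fintype.sum_prod_type_right]
        have hc (k : ι₁ × ι₂) : ∑ k' : ι₁ × ι₂, (if k.2 = k'.2 then c else 0) =
            Fintype.card ι₁ * c := by
          simp [Fintype.sum_prod_type]
        simp [Finset.sum_add_distrib, hb, hc]
        ring

theorem sq_le_mul_measureReal_iUnion_of_measure_inter_eq_ite {Ω ι₁ ι₂ : Type*}
    [MeasurableSpace Ω] {μ : Measure Ω} [IsFiniteMeasure μ] [Fintype ι₁] [Fintype ι₂]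
    [DecidableEq ι₁] [DecidableEq ι₂] {E : ι₁ × ι₂ → Set Ω} (hE : ∀ k, MeasurableSet (E k))
    {p I J : ℝ≥0∞} (hEE : ∀ k k', μ (E k ∩ E k') =
      if k.1 = k'.1 then if k.2 = k'.2 then p else I else if k.2 = k'.2 then J else p ^ 2) :
    (Fintype.card ι₁ * Fintype.card ι₂ * p.toReal) ^ 2 ≤
      (Fintype.card ι₁ * Fintype.card ι₂ * p.toReal +
        Fintype.card ι₁ * Fintype.card ι₂ ^ 2 * I.toReal +
        Fintype.card ι₁ ^ 2 * Fintype.card ι₂ * J.toReal +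
        (Fintype.card ι₁ * Fintype.card ι₂ * p.toReal) ^ 2) * μ.real (⋃ k, E k) := by
  have h_mean : ∑ k, μ.real (E k) = Fintype.card ι₁ * Fintype.card ι₂ * p.toReal := by
    have h_single (k : ι₁ × ι₂) : μ (E k) = p := by simpa using hEE k k
    simp [measureReal_def, h_single]
  have h_pairs : ∑ k, ∑ k', μ.real (E k ∩ E k') ≤
      Fintype.card ι₁ * Fintype.card ι₂ * p.toReal +
        Fintype.card ι₁ * Fintype.card ι₂ ^ 2 * I.toReal +
        Fintype.card ι₁ ^ 2 * Fintype.card ι₂ * J.toReal +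
        (Fintype.card ι₁ * Fintype.card ι₂) ^ 2 * p.toReal ^ 2 := by
    simp only [measureReal_def, hEE, apply_ite ENNReal.toReal, ENNReal.toReal_pow]
    exact sum_sum_ite_fst_snd_le ENNReal.toReal_nonneg ENNReal.toReal_nonneg (sq_nonneg _)
  calc _ = (∑ k, μ.real (E k)) ^ 2 := by rw [h_mean]
    _ ≤ (∑ k, ∑ k', μ.real (E k ∩ E k')) * μ.real (⋃ k, E k) :=
      sq_sum_measureReal_le_sum_measureReal_inter_mul_measureReal_iUnion hE
    _ ≤ _ := by
      gcongr
      exact h_pairs.trans_eq (by ring)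

theorem one_div_four_mul_min_le_of_sq_le {m x₁ x₂ s₁ s₂ u : ℝ} (hm : 0 ≤ m) (hs₁ : 0 ≤ s₁)
    (hs₂ : 0 ≤ s₂) (hu : 0 ≤ u) (h₁ : x₁ * s₁ = m ^ 2) (h₂ : x₂ * s₂ = m ^ 2)
    (h : m ^ 2 ≤ (m + s₁ + s₂ + m ^ 2) * u) :
    1 / 4 * min 1 (min x₁ (min x₂ m)) ≤ u := by
  set t := min 1 (min x₁ (min x₂ m))
  have ht₁ : t ≤ 1 := min_le_left _ _
  have htx₁ : t ≤ x₁ := (min_le_right _ _).trans (min_le_left _ _)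
  have htx₂ : t ≤ x₂ := (min_le_right _ _).trans ((min_le_right _ _).trans (min_le_left _ _))
  have htm : t ≤ m := (min_le_right _ _).trans ((min_le_right _ _).trans (min_le_right _ _))
  rcases (by positivity : 0 ≤ m + s₁ + s₂ + m ^ 2).eq_or_lt with hS | hS
  · have hm0 : m = 0 := by nlinarith
    linarith
  have htS : t * (m + s₁ + s₂ + m ^ 2) ≤ 4 * u * (m + s₁ + s₂ + m ^ 2) := by
    nlinarith [mul_le_mul_of_nonneg_right htm hm, mul_le_mul_of_nonneg_right htx₁ hs₁,
      mul_le_mul_of_nonneg_right htx₂ hs₂, mul_le_mul_of_nonneg_right ht₁ (sq_nonneg m)]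
  linarith [le_of_mul_le_mul_right htS hS]

/-- Lower bound for the doubly-indexed union in terms of the projections of `A`:
if the slice probabilities are constant on each projection, then
`ℙ[⋃_{i,j} {(Z₁(i),Z₂(j)) ∈ A}] ≥ (1/4) min{1, M₁ P₁(A₁), M₂ P₂(A₂), M₁ M₂ P(A)}`. -/
theorem union_double_lower_proj {Ω α β : Type*} [MeasurableSpace Ω] [MeasurableSpace α]
    [MeasurableSpace β] (μ : Measure Ω) [IsProbabilityMeasure μ] {M₁ M₂ : ℕ}
    (Z₁ : Fin M₁ → Ω → α) (Z₂ : Fin M₂ → Ω → β)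
    (P₁ : Measure α) (P₂ : Measure β) [IsProbabilityMeasure P₁] [IsProbabilityMeasure P₂]
    (hm₁ : ∀ i, Measurable (Z₁ i)) (hm₂ : ∀ j, Measurable (Z₂ j))
    (hid₁ : ∀ i, μ.map (Z₁ i) = P₁) (hid₂ : ∀ j, μ.map (Z₂ j) = P₂)
    (hpi₁ : ∀ i i', i ≠ i' → IndepFun (Z₁ i) (Z₁ i') μ)
    (hpi₂ : ∀ j j', j ≠ j' → IndepFun (Z₂ j) (Z₂ j') μ)
    (hindep : IndepFun (fun ω i => Z₁ i ω) (fun ω j => Z₂ j ω) μ)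
    (A : Set (α × β)) (hA : MeasurableSet A)
    (A₁ : Set α) (hA₁def : A₁ = {z₁ | ∃ z₂, (z₁, z₂) ∈ A}) (hA₁m : MeasurableSet A₁)
    (A₂ : Set β) (hA₂def : A₂ = {z₂ | ∃ z₁, (z₁, z₂) ∈ A}) (hA₂m : MeasurableSet A₂)
    (hconst₁ : ∀ z₁ ∈ A₁, ∀ z₁' ∈ A₁,
      P₂ {z₂ | (z₁, z₂) ∈ A} = P₂ {z₂ | (z₁', z₂) ∈ A})
    (hconst₂ : ∀ z₂ ∈ A₂, ∀ z₂' ∈ A₂,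
      P₁ {z₁ | (z₁, z₂) ∈ A} = P₁ {z₁ | (z₁, z₂') ∈ A}) :
    (1 / 4) * min 1 (min ((M₁ : ℝ) * (P₁ A₁).toReal)
        (min ((M₂ : ℝ) * (P₂ A₂).toReal)
          ((M₁ : ℝ) * (M₂ : ℝ) * ((P₁.prod P₂) A).toReal)))
      ≤ (μ {ω | ∃ i j, (Z₁ i ω, Z₂ j ω) ∈ A}).toReal := by
  have h_second := sq_le_mul_measureReal_iUnion_of_measure_inter_eq_ite (μ := μ)
    (E := fun k : Fin M₁ × Fin M₂ => {ω | (Z₁ k.1 ω, Z₂ k.2 ω) ∈ A})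
    (fun k => (hm₁ k.1).prodMk (hm₂ k.2) hA) fun k k' =>
      measure_prodMk_mem_inter_prodMk_mem_eq_ite hm₁ hm₂ hid₁ hid₂ hpi₁ hpi₂ hindep hA
        k.1 k'.1 k.2 k'.2
  have h_union : ⋃ k : Fin M₁ × Fin M₂, {ω | (Z₁ k.1 ω, Z₂ k.2 ω) ∈ A} =
      {ω | ∃ i j, (Z₁ i ω, Z₂ j ω) ∈ A} := by
    ext; simp
  simp only [Fintype.card_fin, h_union, measureReal_def] at h_second
  have h_slice₁ := congrArg ENNReal.toReal
    (measure_proj_mul_lintegral_sq_slice_eq_sq_prod_apply hA hA₁def hA₁m hconst₁ (P := P₁))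
  have h_slice₂ := congrArg ENNReal.toReal
    (measure_proj_mul_lintegral_sq_slice_eq_sq_prod_apply_symm hA hA₂def hA₂m hconst₂ (Q := P₂))
  rw [ENNReal.toReal_mul, ENNReal.toReal_pow] at h_slice₁ h_slice₂
  refine one_div_four_mul_min_le_of_sq_le (by positivity) (by positivity) (by positivity)
    ENNReal.toReal_nonneg ?_ ?_ h_second
  · linear_combination (M₁ ^ 2 * M₂ ^ 2 : ℝ) * h_slice₁
  · linear_combination (M₁ ^ 2 * M₂ ^ 2 : ℝ) * h_slice₂
end
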